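/- arXiv:2302.06066 — 5 statements merged into one kernel-verified Lean document; each statement's English description precedes it below -/
import Mathlib

section
/- Suppose a sequence x̂_1,…,x̂_T in X satisfies the contraction property ‖x̂_t − Π_{F*_{t-1}}(x̂_t)‖ ≤ ρ‖x̂_{t-1} − Π_{F*_{t-1}}(x̂_{t-1})‖ for all t = 2,…,T, where 0 ≤ ρ < 1. Then Σ_{t=1}^T ‖x̂_t − Π_{F*_t}(x̂_t)‖ ≤ (P*_T + ‖x̂_1 − Π_{F*_1}(x̂_1)‖)/(1 − ρ), where P*_T = Σ_{t=2}^T max_{x∈X} ‖Π_{F*_t}(x) − Π_{F*_{t-1}}(x)‖. -/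
open Finset

/-- contraction property implies aggregate-error bound in terms of the
path length of the projection maps. -/
theorem aggregate_error_bound_of_contraction
    {n : ℕ} (X : Set (EuclideanSpace ℝ (Fin n)))
    (hXne : X.Nonempty) (hXcomp : IsCompact X) (hXconv : Convex ℝ X)
    (T : ℕ) (hT : 1 ≤ T)
    (F : ℕ → Set (EuclideanSpace ℝ (Fin n)))
    (hF : ∀ t ∈ Icc 1 T, (F t).Nonempty ∧ IsClosed (F t) ∧ Convex ℝ (F t) ∧ F t ⊆ X)
    (P : ℕ → EuclideanSpace ℝ (Fin n) → EuclideanSpace ℝ (Fin n))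
    (hP : ∀ t ∈ Icc 1 T, ∀ z, P t z ∈ F t ∧ ∀ c ∈ F t, ‖z - P t z‖ ≤ ‖z - c‖)
    (x : ℕ → EuclideanSpace ℝ (Fin n)) (hx : ∀ t ∈ Icc 1 T, x t ∈ X)
    (ρ : ℝ) (hρ0 : 0 ≤ ρ) (hρ1 : ρ < 1)
    (hcontr : ∀ t ∈ Icc 2 T,
      ‖x t - P (t - 1) (x t)‖ ≤ ρ * ‖x (t - 1) - P (t - 1) (x (t - 1))‖) :
    ∑ t ∈ Icc 1 T, ‖x t - P t (x t)‖
      ≤ ((∑ t ∈ Icc 2 T, ⨆ y : X, ‖P t y - P (t - 1) y‖)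
          + ‖x 1 - P 1 (x 1)‖) / (1 - ρ) := by
  obtain ⟨C, hC⟩ := hXcomp.isBounded.subset_closedBall 0
  have hCmem : ∀ z ∈ X, ‖z‖ ≤ C := by
    intro z hz
    have := hC hz
    simpa [Metric.mem_closedBall, dist_eq_norm] using this
  set d : ℕ → ℝ := fun t => ‖x t - P t (x t)‖ with hd
  set s : ℕ → ℝ := fun t => ⨆ y : X, ‖P t (y : EuclideanSpace ℝ (Fin n)) - P (t - 1) y‖
    with hs
  have dnonneg : ∀ t, 0 ≤ d t := fun t => norm_nonneg _
  have key : ∀ t ∈ Icc 2 T, d t ≤ ρ * d (t - 1) + s t := by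
    intro t ht
    simp only [mem_Icc] at ht
    have ht1 : t ∈ Icc 1 T := by simp only [mem_Icc]; omega
    have ht1' : t - 1 ∈ Icc 1 T := by simp only [mem_Icc]; omega
    have hxt : x t ∈ X := hx t ht1
    have hbdd : BddAbove (Set.range fun y : X =>
        ‖P t (y : EuclideanSpace ℝ (Fin n)) - P (t - 1) y‖) := by
      refine ⟨C + C, ?_⟩
      rintro r ⟨y, rfl⟩
      have h1 : P t y ∈ X := (hF t ht1).2.2.2 ((hP t ht1 y).1)
      have h2 : P (t - 1) y ∈ X := (hF (t - 1) ht1').2.2.2 ((hP (t - 1) ht1' y).1)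
      calc ‖P t (y : EuclideanSpace ℝ (Fin n)) - P (t - 1) y‖
          ≤ ‖P t (y : EuclideanSpace ℝ (Fin n))‖ + ‖P (t - 1) (y : EuclideanSpace ℝ (Fin n))‖ :=
            norm_sub_le _ _
        _ ≤ C + C := add_le_add (hCmem _ h1) (hCmem _ h2)
    have h1 : ‖x t - P (t - 1) (x t)‖ ≤ ρ * d (t - 1) :=
      hcontr t (by simp only [mem_Icc]; omega)
    have h2 : ‖P (t - 1) (x t) - P t (x t)‖ ≤ s t := by
      rw [norm_sub_rev]
      exact le_ciSup hbdd (⟨x t, hxt⟩ : X)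
    calc d t = ‖(x t - P (t - 1) (x t)) + (P (t - 1) (x t) - P t (x t))‖ := by
          rw [hd]; simp [sub_add_sub_cancel]
      _ ≤ ‖x t - P (t - 1) (x t)‖ + ‖P (t - 1) (x t) - P t (x t)‖ := norm_add_le _ _
      _ ≤ ρ * d (t - 1) + s t := add_le_add h1 h2
  have hIcc : Icc 1 T = insert 1 (Icc 2 T) := by
    ext a; simp only [mem_Icc, mem_insert]; omega
  have h1notin : (1 : ℕ) ∉ Icc 2 T := by simp
  have hsplit : ∑ t ∈ Icc 1 T, d t = d 1 + ∑ t ∈ Icc 2 T, d t := by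
    rw [hIcc, sum_insert h1notin]
  have hshift : ∑ t ∈ Icc 2 T, d (t - 1) ≤ ∑ t ∈ Icc 1 T, d t := by
    have heq : ∑ t ∈ Icc 2 T, d (t - 1) = ∑ t ∈ Icc 1 (T - 1), d t := by
      refine Finset.sum_nbij' (fun t => t - 1) (fun t => t + 1) ?_ ?_ ?_ ?_ ?_ <;>
        intros <;> simp_all only [mem_Icc] <;> omega
    rw [heq]
    exact Finset.sum_le_sum_of_subset_of_nonneg
      (Finset.Icc_subset_Icc le_rfl (by omega)) (fun i _ _ => dnonneg i)
  have hmain : ∑ t ∈ Icc 2 T, d t ≤ ρ * ∑ t ∈ Icc 1 T, d t + ∑ t ∈ Icc 2 T, s t := by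
    calc ∑ t ∈ Icc 2 T, d t ≤ ∑ t ∈ Icc 2 T, (ρ * d (t - 1) + s t) :=
          Finset.sum_le_sum key
      _ = ρ * ∑ t ∈ Icc 2 T, d (t - 1) + ∑ t ∈ Icc 2 T, s t := by
          rw [Finset.sum_add_distrib, Finset.mul_sum]
      _ ≤ ρ * ∑ t ∈ Icc 1 T, d t + ∑ t ∈ Icc 2 T, s t := by
          have := mul_le_mul_of_nonneg_left hshift hρ0
          linarith
  rw [le_div_iff₀ (by linarith : (0:ℝ) < 1 - ρ)]
  nlinarith [hsplit, hmain]
end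

section
/- Let ℓ : X → ℝ be convex, λ-strongly convex, and L-smooth on the closed convex set X, with unique minimizer x* over X. Let 0 < η ≤ 1/L and define x⁺ = Π_X[x − η∇ℓ(x)]. Then ‖x⁺ − x*‖² ≤ (1 − λ/(λ + 1/η)) ‖x − x*‖². -/
/-!
The projection onto a convex set satisfies the variational inequality
`⟪z - Π z, c - Π z⟫ ≤ 0` for every `c ∈ X`. Applied to `z = x - η ∇ℓ(x)` and `c = x*`, it bounds
`⟪x - x⁺, x* - x⁺⟫` by `η ⟪∇ℓ(x), x* - x⁺⟫`; smoothness at `x⁺`, strong convexity at `x*` and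
`ℓ x* ≤ ℓ x⁺` bound that in turn, and expanding `‖x - x*‖²` around `x⁺` gives
`‖x⁺ - x*‖² ≤ (1 - ηλ) ‖x - x*‖²`. Finally `1 - ηλ ≤ 1 / (1 + ηλ) = 1 - λ / (λ + 1/η)`.
-/

open RealInnerProductSpace

section

variable {E : Type*} [NormedAddCommGroup E] [InnerProductSpace ℝ E]

theorem real_inner_sub_nearest_le_zero {s : Set E} (hs : Convex ℝ s) {z q c : E} (hq : q ∈ s)
    (hnearest : ∀ w ∈ s, ‖z - q‖ ≤ ‖z - w‖) (hc : c ∈ s) : ⟪z - q, c - q⟫ ≤ 0 := by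
  have : Nonempty s := ⟨⟨q, hq⟩⟩
  have hinf : ‖z - q‖ = ⨅ w : s, ‖z - w‖ :=
    le_antisymm (le_ciInf fun w => hnearest w w.2)
      (ciInf_le (f := fun w : s => ‖z - w‖)
        ⟨0, Set.forall_mem_range.2 fun _ => norm_nonneg _⟩ ⟨q, hq⟩)
  exact (norm_eq_iInf_iff_real_inner_le_zero hs hq).1 hinf c hc

theorem sq_norm_sub_le_of_projected_gradient_step {ℓ : E → ℝ} {x p xstar g : E}
    {lam L η : ℝ} (hη : 0 ≤ η) (hηL : η * L ≤ 1)
    (hvariational : ⟪x - η • g - p, xstar - p⟫ ≤ 0)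
    (hsc : ℓ xstar ≥ ℓ x + ⟪g, xstar - x⟫ + lam / 2 * ‖xstar - x‖ ^ 2)
    (hsmooth : ℓ p ≤ ℓ x + ⟪g, p - x⟫ + L / 2 * ‖p - x‖ ^ 2)
    (hmin : ℓ xstar ≤ ℓ p) :
    ‖p - xstar‖ ^ 2 ≤ (1 - η * lam) * ‖x - xstar‖ ^ 2 := by
  have hgrad : ⟪g, xstar - p⟫ ≤ L / 2 * ‖x - p‖ ^ 2 - lam / 2 * ‖x - xstar‖ ^ 2 := by
    have hsplit : ⟪g, xstar - p⟫ = ⟪g, xstar - x⟫ - ⟪g, p - x⟫ := by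
      rw [← inner_sub_right, sub_sub_sub_cancel_right]
    rw [norm_sub_rev x, norm_sub_rev x]
    linarith
  have hvar : ⟪x - p, xstar - p⟫ ≤ η * ⟪g, xstar - p⟫ := by
    rw [sub_right_comm, inner_sub_left, real_inner_smul_left] at hvariational
    linarith
  have hexpand : ‖p - xstar‖ ^ 2 = ‖x - xstar‖ ^ 2 - ‖x - p‖ ^ 2 + 2 * ⟪x - p, xstar - p⟫ := by
    have hsplit : x - xstar = (x - p) - (xstar - p) := (sub_sub_sub_cancel_right x xstar p).symm
    rw [norm_sub_rev p, hsplit, norm_sub_sq_real (x - p)]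
    ring
  have hstep : η * L * ‖x - p‖ ^ 2 ≤ ‖x - p‖ ^ 2 :=
    mul_le_of_le_one_left (sq_nonneg _) hηL
  calc ‖p - xstar‖ ^ 2
      ≤ ‖x - xstar‖ ^ 2 - ‖x - p‖ ^ 2 + 2 * (η * ⟪g, xstar - p⟫) := by rw [hexpand]; linarith
    _ ≤ ‖x - xstar‖ ^ 2 - ‖x - p‖ ^ 2
          + 2 * (η * (L / 2 * ‖x - p‖ ^ 2 - lam / 2 * ‖x - xstar‖ ^ 2)) := by gcongr
    _ ≤ (1 - η * lam) * ‖x - xstar‖ ^ 2 := by linarith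

end

theorem one_sub_mul_le_one_sub_div_add_inv {lam η : ℝ} (hlam : 0 ≤ lam) (hη : 0 < η) :
    1 - η * lam ≤ 1 - lam / (lam + 1 / η) := by
  have hcoef : 1 - lam / (lam + 1 / η) = 1 / (1 + η * lam) := by
    field_simp
    ring
  rw [hcoef, le_div_iff₀ (by positivity)]
  nlinarith [sq_nonneg (η * lam)]

theorem projected_gradient_step_contraction_general
    {n : ℕ} (X : Set (EuclideanSpace ℝ (Fin n)))
    (hXconv : Convex ℝ X)
    (projX : EuclideanSpace ℝ (Fin n) → EuclideanSpace ℝ (Fin n))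
    (hproj : ∀ z, projX z ∈ X ∧ ∀ c ∈ X, ‖z - projX z‖ ≤ ‖z - c‖)
    (ℓ : EuclideanSpace ℝ (Fin n) → ℝ)
    (g : EuclideanSpace ℝ (Fin n) → EuclideanSpace ℝ (Fin n))
    (lam L : ℝ) (hlam : 0 < lam)
    (hsc : ∀ x ∈ X, ∀ y ∈ X,
      ℓ y ≥ ℓ x + (inner ℝ (g x) (y - x) : ℝ) + lam / 2 * ‖y - x‖ ^ 2)
    (hsmooth : ∀ x ∈ X, ∀ y ∈ X,
      ℓ y ≤ ℓ x + (inner ℝ (g x) (y - x) : ℝ) + L / 2 * ‖y - x‖ ^ 2)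
    (xstar : EuclideanSpace ℝ (Fin n)) (hxstar : xstar ∈ X)
    (hmin : ∀ y ∈ X, ℓ xstar ≤ ℓ y)
    (η : ℝ) (hη0 : 0 < η) (hηL : η ≤ 1 / L)
    (x : EuclideanSpace ℝ (Fin n)) (hx : x ∈ X) :
    ‖projX (x - η • g x) - xstar‖ ^ 2
      ≤ (1 - lam / (lam + 1 / η)) * ‖x - xstar‖ ^ 2 := by
  obtain ⟨hpX, hnearest⟩ := hproj (x - η • g x)
  have hL : 0 < L := one_div_pos.1 (hη0.trans_le hηL)
  have hηL' : η * L ≤ 1 := (le_div_iff₀ hL).1 hηL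
  calc ‖projX (x - η • g x) - xstar‖ ^ 2
      ≤ (1 - η * lam) * ‖x - xstar‖ ^ 2 :=
        sq_norm_sub_le_of_projected_gradient_step hη0.le hηL'
          (real_inner_sub_nearest_le_zero hXconv hpX hnearest hxstar)
          (hsc x hx xstar hxstar) (hsmooth x hx _ hpX) (hmin _ hpX)
    _ ≤ (1 - lam / (lam + 1 / η)) * ‖x - xstar‖ ^ 2 := by
        gcongr ?_ * _
        exact one_sub_mul_le_one_sub_div_add_inv hlam.le hη0

/-- one projected gradient step on a strongly convex and smooth function
contracts the squared distance to the minimizer. -/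
theorem projected_gradient_step_contraction
    {n : ℕ} (X : Set (EuclideanSpace ℝ (Fin n)))
    (hXne : X.Nonempty) (hXcl : IsClosed X) (hXconv : Convex ℝ X)
    (projX : EuclideanSpace ℝ (Fin n) → EuclideanSpace ℝ (Fin n))
    (hproj : ∀ z, projX z ∈ X ∧ ∀ c ∈ X, ‖z - projX z‖ ≤ ‖z - c‖)
    (ℓ : EuclideanSpace ℝ (Fin n) → ℝ)
    (g : EuclideanSpace ℝ (Fin n) → EuclideanSpace ℝ (Fin n))
    (hdiff : ∀ x ∈ X, HasGradientAt ℓ (g x) x)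
    (lam L : ℝ) (hlam : 0 < lam) (hL : 0 < L)
    (hsc : ∀ x ∈ X, ∀ y ∈ X,
      ℓ y ≥ ℓ x + (inner ℝ (g x) (y - x) : ℝ) + lam / 2 * ‖y - x‖ ^ 2)
    (hsmooth : ∀ x ∈ X, ∀ y ∈ X,
      ℓ y ≤ ℓ x + (inner ℝ (g x) (y - x) : ℝ) + L / 2 * ‖y - x‖ ^ 2)
    (xstar : EuclideanSpace ℝ (Fin n)) (hxstar : xstar ∈ X)
    (hmin : ∀ y ∈ X, ℓ xstar ≤ ℓ y)
    (huniq : ∀ y ∈ X, (∀ z ∈ X, ℓ y ≤ ℓ z) → y = xstar)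
    (η : ℝ) (hη0 : 0 < η) (hηL : η ≤ 1 / L)
    (x : EuclideanSpace ℝ (Fin n)) (hx : x ∈ X) :
    ‖projX (x - η • g x) - xstar‖ ^ 2
      ≤ (1 - lam / (lam + 1 / η)) * ‖x - xstar‖ ^ 2 :=
  projected_gradient_step_contraction_general X hXconv projX hproj ℓ g lam L hlam hsc hsmooth xstar
    hxstar hmin η hη0 hηL x hx
end

section
/- Suppose a sequence x̂_1,…,x̂_T in X satisfies ‖x̂_t − Π_{F*_{t-1}}(x̂_t)‖² ≤ (1/4)‖x̂_{t-1} − Π_{F*_{t-1}}(x̂_{t-1})‖² for all t = 2,…,T. Then Σ_{t=1}^T ‖x̂_t − Π_{F*_t}(x̂_t)‖² ≤ 4S*_T + 2‖x̂_1 − Π_{F*_1}(x̂_1)‖², where S*_T = Σ_{t=2}^T max_{x∈X} ‖Π_{F*_t}(x) − Π_{F*_{t-1}}(x)‖². -/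
open Finset

/-- squared contraction implies a squared aggregate-error bound in terms
of the squared path length of the projection maps. -/
theorem squared_aggregate_error_bound_of_contraction
    {n : ℕ} (X : Set (EuclideanSpace ℝ (Fin n)))
    (hXne : X.Nonempty) (hXcomp : IsCompact X) (hXconv : Convex ℝ X)
    (T : ℕ) (hT : 1 ≤ T)
    (F : ℕ → Set (EuclideanSpace ℝ (Fin n)))
    (hF : ∀ t ∈ Icc 1 T, (F t).Nonempty ∧ IsClosed (F t) ∧ Convex ℝ (F t) ∧ F t ⊆ X)
    (P : ℕ → EuclideanSpace ℝ (Fin n) → EuclideanSpace ℝ (Fin n))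
    (hP : ∀ t ∈ Icc 1 T, ∀ z, P t z ∈ F t ∧ ∀ c ∈ F t, ‖z - P t z‖ ≤ ‖z - c‖)
    (x : ℕ → EuclideanSpace ℝ (Fin n)) (hx : ∀ t ∈ Icc 1 T, x t ∈ X)
    (hcontr : ∀ t ∈ Icc 2 T,
      ‖x t - P (t - 1) (x t)‖ ^ 2
        ≤ (1 / 4) * ‖x (t - 1) - P (t - 1) (x (t - 1))‖ ^ 2) :
    ∑ t ∈ Icc 1 T, ‖x t - P t (x t)‖ ^ 2
      ≤ 4 * (∑ t ∈ Icc 2 T, ⨆ y : X, ‖P t y - P (t - 1) y‖ ^ 2)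
          + 2 * ‖x 1 - P 1 (x 1)‖ ^ 2 := by
  have hXne' : Nonempty X := hXne.to_subtype
  obtain ⟨C, hC⟩ := hXcomp.isBounded.exists_norm_le
  -- per-step key inequality
  have key : ∀ t ∈ Icc 2 T,
      ‖x t - P t (x t)‖ ^ 2
        ≤ 2 * (⨆ y : X, ‖P t y - P (t - 1) y‖ ^ 2)
          + (1 / 2) * ‖x (t - 1) - P (t - 1) (x (t - 1))‖ ^ 2 := by
    intro t ht
    simp only [mem_Icc] at ht
    have ht1 : t ∈ Icc 1 T := by simp only [mem_Icc]; omega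
    have ht1' : t - 1 ∈ Icc 1 T := by simp only [mem_Icc]; omega
    have hPt := hP t ht1
    have hPt' := hP (t - 1) ht1'
    have hxt := hx t ht1
    have hv : ‖P t (x t) - P (t - 1) (x t)‖ ^ 2
        ≤ ⨆ y : X, ‖P t y - P (t - 1) y‖ ^ 2 := by
      have hb : BddAbove (Set.range fun y : X => ‖P t y - P (t - 1) y‖ ^ 2) := by
        refine ⟨(2 * C) ^ 2, ?_⟩
        rintro _ ⟨y, rfl⟩
        have h1 : ‖P t (y : EuclideanSpace ℝ (Fin n))‖ ≤ C :=
          hC _ ((hF t ht1).2.2.2 (hPt y).1)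
        have h2 : ‖P (t - 1) (y : EuclideanSpace ℝ (Fin n))‖ ≤ C :=
          hC _ ((hF (t - 1) ht1').2.2.2 (hPt' y).1)
        have h3 := norm_sub_le (P t (y : EuclideanSpace ℝ (Fin n))) (P (t - 1) y)
        have h4 := norm_nonneg (P t (y : EuclideanSpace ℝ (Fin n)) - P (t - 1) y)
        show ‖P t (y : EuclideanSpace ℝ (Fin n)) - P (t - 1) y‖ ^ 2 ≤ (2 * C) ^ 2
        nlinarith
      exact le_ciSup hb (⟨x t, hxt⟩ : X)
    have hv' : ‖P (t - 1) (x t) - P t (x t)‖ ^ 2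
        ≤ ⨆ y : X, ‖P t y - P (t - 1) y‖ ^ 2 := by
      rw [norm_sub_rev]; exact hv
    have hcon := hcontr t (by simp only [mem_Icc]; omega)
    have hsplit : x t - P t (x t)
        = (x t - P (t - 1) (x t)) + (P (t - 1) (x t) - P t (x t)) := by abel
    have htri : ‖x t - P t (x t)‖
        ≤ ‖x t - P (t - 1) (x t)‖ + ‖P (t - 1) (x t) - P t (x t)‖ := by
      rw [hsplit]; exact norm_add_le _ _
    nlinarith [norm_nonneg (x t - P t (x t)), norm_nonneg (x t - P (t - 1) (x t)),
      norm_nonneg (P (t - 1) (x t) - P t (x t)),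
      sq_nonneg (‖x t - P (t - 1) (x t)‖ - ‖P (t - 1) (x t) - P t (x t)‖)]
  have hsum2 : ∑ t ∈ Icc 2 T, ‖x t - P t (x t)‖ ^ 2
      ≤ 2 * (∑ t ∈ Icc 2 T, ⨆ y : X, ‖P t y - P (t - 1) y‖ ^ 2)
        + (1 / 2) * ∑ t ∈ Icc 2 T, ‖x (t - 1) - P (t - 1) (x (t - 1))‖ ^ 2 := by
    rw [Finset.mul_sum, Finset.mul_sum, ← Finset.sum_add_distrib]
    exact Finset.sum_le_sum key
  have hre : ∑ t ∈ Icc 2 T, ‖x (t - 1) - P (t - 1) (x (t - 1))‖ ^ 2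
      = ∑ t ∈ Icc 1 (T - 1), ‖x t - P t (x t)‖ ^ 2 := by
    have hIcc : Icc 2 T = Finset.map (addRightEmbedding 1) (Icc 1 (T - 1)) := by
      rw [Finset.map_add_right_Icc]
      congr 1
      omega
    rw [hIcc, Finset.sum_map]
    simp [addRightEmbedding]
  have hsub : ∑ t ∈ Icc 1 (T - 1), ‖x t - P t (x t)‖ ^ 2
      ≤ ∑ t ∈ Icc 1 T, ‖x t - P t (x t)‖ ^ 2 := by
    apply Finset.sum_le_sum_of_subset_of_nonneg
    · exact Finset.Icc_subset_Icc_right (by omega)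
    · intros; positivity
  have hsplit1 : ∑ t ∈ Icc 1 T, ‖x t - P t (x t)‖ ^ 2
      = ‖x 1 - P 1 (x 1)‖ ^ 2 + ∑ t ∈ Icc 2 T, ‖x t - P t (x t)‖ ^ 2 := by
    have h1 : Icc 1 T = insert 1 (Icc 2 T) := by
      ext m; simp only [mem_Icc, mem_insert]; omega
    rw [h1, Finset.sum_insert (by simp [mem_Icc])]
  linarith
end

section
/- Assume each cost function f_t : X → ℝ is K-Lipschitz, each attains its minimum over X, and the played sequence x̂_1,…,x̂_T ∈ X satisfies the contraction ‖x̂_t − Π_{F*_{t-1}}(x̂_t)‖ ≤ ρ‖x̂_{t-1} − Π_{F*_{t-1}}(x̂_{t-1})‖ for t = 2,…,T with 0 ≤ ρ < 1. Then the dynamic regret satisfies Σ_{t=1}^T f_t(x̂_t) − Σ_{t=1}^T min_{x∈X} f_t(x) ≤ K·P*_T/(1−ρ) + K·‖x̂_1 − Π_{F*_1}(x̂_1)‖/(1−ρ). -/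
open Finset

/-- Lipschitz cost functions together with the contraction property of
the played sequence yield the dynamic regret bound
`K·P*_T/(1−ρ) + K·‖x̂₁ − Π_{F*₁}(x̂₁)‖/(1−ρ)`. -/
theorem universal_dynamic_regret_bound
    {n : ℕ} (X : Set (EuclideanSpace ℝ (Fin n)))
    (hXne : X.Nonempty) (hXcomp : IsCompact X) (hXconv : Convex ℝ X)
    (T : ℕ) (hT : 1 ≤ T)
    (f : ℕ → EuclideanSpace ℝ (Fin n) → ℝ) (K : ℝ) (hK : 0 ≤ K)
    (hLip : ∀ t ∈ Icc 1 T, ∀ x ∈ X, ∀ y ∈ X, |f t x - f t y| ≤ K * ‖x - y‖)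
    (F : ℕ → Set (EuclideanSpace ℝ (Fin n)))
    (hFdef : ∀ t ∈ Icc 1 T, F t = {y ∈ X | ∀ z ∈ X, f t y ≤ f t z})
    (hF : ∀ t ∈ Icc 1 T, (F t).Nonempty ∧ IsClosed (F t) ∧ Convex ℝ (F t))
    (P : ℕ → EuclideanSpace ℝ (Fin n) → EuclideanSpace ℝ (Fin n))
    (hP : ∀ t ∈ Icc 1 T, ∀ z, P t z ∈ F t ∧ ∀ c ∈ F t, ‖z - P t z‖ ≤ ‖z - c‖)
    (x : ℕ → EuclideanSpace ℝ (Fin n)) (hx : ∀ t ∈ Icc 1 T, x t ∈ X)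
    (ρ : ℝ) (hρ0 : 0 ≤ ρ) (hρ1 : ρ < 1)
    (hcontr : ∀ t ∈ Icc 2 T,
      ‖x t - P (t - 1) (x t)‖ ≤ ρ * ‖x (t - 1) - P (t - 1) (x (t - 1))‖) :
    ∑ t ∈ Icc 1 T, f t (x t) - ∑ t ∈ Icc 1 T, f t (P t (x t))
      ≤ K * (∑ t ∈ Icc 2 T, ⨆ y : X, ‖P t y - P (t - 1) y‖) / (1 - ρ)
          + K * ‖x 1 - P 1 (x 1)‖ / (1 - ρ) := by
  have hρ' : 0 < 1 - ρ := by linarith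
  set d : ℕ → ℝ := fun t => ‖x t - P t (x t)‖ with hd
  set s : ℕ → ℝ := fun t => ⨆ y : X, ‖P t y - P (t - 1) y‖ with hs
  have hFX : ∀ t ∈ Icc 1 T, ∀ z, P t z ∈ X := by
    intro t ht z
    have h1 := (hP t ht z).1
    rw [hFdef t ht] at h1
    exact h1.1
  obtain ⟨C, hC⟩ := Metric.isBounded_iff.mp hXcomp.isBounded
  have stepA : ∑ t ∈ Icc 1 T, f t (x t) - ∑ t ∈ Icc 1 T, f t (P t (x t))
      ≤ K * ∑ t ∈ Icc 1 T, d t := by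
    rw [← Finset.sum_sub_distrib, Finset.mul_sum]
    apply Finset.sum_le_sum
    intro t ht
    have h := hLip t ht (x t) (hx t ht) (P t (x t)) (hFX t ht (x t))
    calc f t (x t) - f t (P t (x t)) ≤ |f t (x t) - f t (P t (x t))| := le_abs_self _
      _ ≤ K * ‖x t - P t (x t)‖ := h
  have hsle : ∀ t ∈ Icc 2 T, ‖P t (x t) - P (t - 1) (x t)‖ ≤ s t := by
    intro t ht
    have ht2 := Finset.mem_Icc.mp ht
    have ht1 : t ∈ Icc 1 T := Finset.mem_Icc.mpr ⟨by omega, ht2.2⟩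
    have ht1' : t - 1 ∈ Icc 1 T := Finset.mem_Icc.mpr ⟨by omega, by omega⟩
    have hb : BddAbove (Set.range fun y : X => ‖P t (y : EuclideanSpace ℝ (Fin n)) - P (t - 1) y‖) := by
      refine ⟨C, ?_⟩
      rintro _ ⟨y, rfl⟩
      have h1 := hFX t ht1 y
      have h2 := hFX (t - 1) ht1' y
      have h3 := hC h1 h2
      rwa [dist_eq_norm] at h3
    exact le_ciSup hb (⟨x t, hx t ht1⟩ : X)
  have hrec : ∀ t ∈ Icc 2 T, d t ≤ ρ * d (t - 1) + s t := by
    intro t ht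
    have tri : ‖x t - P t (x t)‖
        ≤ ‖x t - P (t - 1) (x t)‖ + ‖P t (x t) - P (t - 1) (x t)‖ := by
      have h := dist_triangle (x t) (P (t - 1) (x t)) (P t (x t))
      rw [dist_eq_norm, dist_eq_norm, dist_eq_norm] at h
      calc ‖x t - P t (x t)‖
          ≤ ‖x t - P (t - 1) (x t)‖ + ‖P (t - 1) (x t) - P t (x t)‖ := h
        _ = _ := by rw [norm_sub_rev (P (t - 1) (x t))]
    calc d t ≤ ‖x t - P (t - 1) (x t)‖ + ‖P t (x t) - P (t - 1) (x t)‖ := tri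
      _ ≤ ρ * d (t - 1) + s t := add_le_add (hcontr t ht) (hsle t ht)
  have dnonneg : ∀ t, 0 ≤ d t := fun t => norm_nonneg _
  have hsplit : ∑ t ∈ Icc 1 T, d t = d 1 + ∑ t ∈ Icc 2 T, d t := by
    have h21 : Icc 2 T = Ioc 1 T := by
      ext a; simp only [Finset.mem_Icc, Finset.mem_Ioc]; omega
    rw [Finset.Icc_eq_cons_Ioc hT, Finset.sum_cons, h21]
  have hre : ∑ t ∈ Icc 2 T, d (t - 1) ≤ ∑ t ∈ Icc 1 T, d t := by
    have heq : ∑ t ∈ Icc 2 T, d (t - 1) = ∑ t ∈ Icc 1 (T - 1), d t := by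
      apply Finset.sum_nbij' (fun t => t - 1) (fun t => t + 1)
      · intro a ha; have := Finset.mem_Icc.mp ha; exact Finset.mem_Icc.mpr ⟨by omega, by omega⟩
      · intro a ha; have := Finset.mem_Icc.mp ha; exact Finset.mem_Icc.mpr ⟨by omega, by omega⟩
      · intro a ha; have := Finset.mem_Icc.mp ha; omega
      · intro a ha; omega
      · intro a ha; rfl
    rw [heq]
    exact Finset.sum_le_sum_of_subset_of_nonneg
      (Finset.Icc_subset_Icc_right (by omega)) (fun t _ _ => dnonneg t)
  have key : (1 - ρ) * ∑ t ∈ Icc 1 T, d t ≤ (∑ t ∈ Icc 2 T, s t) + d 1 := by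
    have h2 : ∑ t ∈ Icc 2 T, d t
        ≤ ρ * ∑ t ∈ Icc 2 T, d (t - 1) + ∑ t ∈ Icc 2 T, s t := by
      rw [Finset.mul_sum, ← Finset.sum_add_distrib]
      exact Finset.sum_le_sum hrec
    have h3 : ρ * ∑ t ∈ Icc 2 T, d (t - 1) ≤ ρ * ∑ t ∈ Icc 1 T, d t :=
      mul_le_mul_of_nonneg_left hre hρ0
    rw [sub_mul, one_mul]
    linarith
  refine stepA.trans ?_
  have hsum : ∑ t ∈ Icc 1 T, d t ≤ ((∑ t ∈ Icc 2 T, s t) + d 1) / (1 - ρ) := by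
    rw [le_div_iff₀ hρ']
    nlinarith [key]
  calc K * ∑ t ∈ Icc 1 T, d t
      ≤ K * (((∑ t ∈ Icc 2 T, s t) + d 1) / (1 - ρ)) :=
        mul_le_mul_of_nonneg_left hsum hK
    _ = K * (∑ t ∈ Icc 2 T, s t) / (1 - ρ) + K * d 1 / (1 - ρ) := by
        field_simp
end

section
/- If f : X → ℝ is L-smooth on convex X with minimizer x* ∈ X, and the sequences x̂_t ∈ X, x̂_t* ∈ argmin f_t satisfy Σ_{t=1}^T‖x̂_t − x̂_t*‖² ≤ 4S + 2D² and Σ_{t=1}^T‖∇f_t(x̂_t*)‖² ≤ G, then for every α > 0: Σ_{t=1}^T f_t(x̂_t) − Σ_{t=1}^T f_t(x̂_t*) ≤ G/(2α) + 2(L+α)S + (L+α)D². -/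
open Finset

/-!
The smoothness upper bound at the minimizer `x̂ₜ*` towards `x̂ₜ`, with its linear term split by
Young's inequality `⟪u, v⟫ ≤ ‖u‖² / (2α) + α/2 ‖v‖²`, bounds the regret of round `t` by
`‖∇fₜ(x̂ₜ*)‖² / (2α) + (L + α)/2 ‖x̂ₜ - x̂ₜ*‖²`; summing over the rounds and inserting the two
given bounds on the sums gives the claim.
-/

section InnerProductSpace

variable {E : Type*} [NormedAddCommGroup E] [InnerProductSpace ℝ E]

theorem real_inner_le_norm_sq_div_add_mul_norm_sq {α : ℝ} (hα : 0 < α) (u v : E) :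
    inner ℝ u v ≤ ‖u‖ ^ 2 / (2 * α) + α / 2 * ‖v‖ ^ 2 := by
  have young := two_mul_le_add_mul_sq (a := ‖v‖) (b := ‖u‖) hα
  have h : ‖u‖ ^ 2 / (2 * α) = α⁻¹ * ‖u‖ ^ 2 / 2 := by field_simp
  linarith [real_inner_le_norm u v]

theorem sub_le_of_smooth_upper_bound {f : E → ℝ} {p d y : E} {L α : ℝ} (hα : 0 < α)
    (hsmooth : f y ≤ f p + inner ℝ d (y - p) + L / 2 * ‖y - p‖ ^ 2) :
    f y - f p ≤ ‖d‖ ^ 2 / (2 * α) + (L + α) / 2 * ‖y - p‖ ^ 2 := by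
  linarith [real_inner_le_norm_sq_div_add_mul_norm_sq hα d (y - p)]

end InnerProductSpace

theorem smooth_dynamic_regret_sum_bound_general
    {n : ℕ} (X : Set (EuclideanSpace ℝ (Fin n)))
    (T : ℕ) (f : ℕ → EuclideanSpace ℝ (Fin n) → ℝ)
    (g : ℕ → EuclideanSpace ℝ (Fin n) → EuclideanSpace ℝ (Fin n))
    (L : ℝ) (hL : 0 < L)
    (hsmooth : ∀ t ∈ Icc 1 T, ∀ x ∈ X, ∀ y ∈ X,
      f t y ≤ f t x + (inner ℝ (g t x) (y - x) : ℝ) + L / 2 * ‖y - x‖ ^ 2)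
    (x xstar : ℕ → EuclideanSpace ℝ (Fin n))
    (hx : ∀ t ∈ Icc 1 T, x t ∈ X)
    (hxstar : ∀ t ∈ Icc 1 T, xstar t ∈ X ∧ ∀ y ∈ X, f t (xstar t) ≤ f t y)
    (S D G : ℝ)
    (hSsum : ∑ t ∈ Icc 1 T, ‖x t - xstar t‖ ^ 2 ≤ 4 * S + 2 * D ^ 2)
    (hGsum : ∑ t ∈ Icc 1 T, ‖g t (xstar t)‖ ^ 2 ≤ G)
    (α : ℝ) (hα : 0 < α) :
    ∑ t ∈ Icc 1 T, f t (x t) - ∑ t ∈ Icc 1 T, f t (xstar t)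
      ≤ G / (2 * α) + 2 * (L + α) * S + (L + α) * D ^ 2 := by
  have round_bound : ∀ t ∈ Icc 1 T, f t (x t) - f t (xstar t)
      ≤ ‖g t (xstar t)‖ ^ 2 / (2 * α) + (L + α) / 2 * ‖x t - xstar t‖ ^ 2 := fun t ht =>
    sub_le_of_smooth_upper_bound hα (hsmooth t ht _ (hxstar t ht).1 _ (hx t ht))
  calc ∑ t ∈ Icc 1 T, f t (x t) - ∑ t ∈ Icc 1 T, f t (xstar t)
      = ∑ t ∈ Icc 1 T, (f t (x t) - f t (xstar t)) := (sum_sub_distrib _ _).symm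
    _ ≤ ∑ t ∈ Icc 1 T, (‖g t (xstar t)‖ ^ 2 / (2 * α) + (L + α) / 2 * ‖x t - xstar t‖ ^ 2) :=
        sum_le_sum round_bound
    _ = (∑ t ∈ Icc 1 T, ‖g t (xstar t)‖ ^ 2) / (2 * α)
        + (L + α) / 2 * ∑ t ∈ Icc 1 T, ‖x t - xstar t‖ ^ 2 := by
        rw [sum_add_distrib, sum_div, mul_sum]
    _ ≤ G / (2 * α) + (L + α) / 2 * (4 * S + 2 * D ^ 2) := by gcongr
    _ = G / (2 * α) + 2 * (L + α) * S + (L + α) * D ^ 2 := by ring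

/-- summing the per-round smoothness bound and using the given bounds on
the squared-error and gradient-norm sums yields the regret bound
`G/(2α) + 2(L+α)S + (L+α)D²`. -/
theorem smooth_dynamic_regret_sum_bound
    {n : ℕ} (X : Set (EuclideanSpace ℝ (Fin n))) (hXconv : Convex ℝ X)
    (T : ℕ) (f : ℕ → EuclideanSpace ℝ (Fin n) → ℝ)
    (g : ℕ → EuclideanSpace ℝ (Fin n) → EuclideanSpace ℝ (Fin n))
    (hdiff : ∀ t ∈ Icc 1 T, ∀ x ∈ X, HasGradientAt (f t) (g t x) x)
    (L : ℝ) (hL : 0 < L)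
    (hsmooth : ∀ t ∈ Icc 1 T, ∀ x ∈ X, ∀ y ∈ X,
      f t y ≤ f t x + (inner ℝ (g t x) (y - x) : ℝ) + L / 2 * ‖y - x‖ ^ 2)
    (x xstar : ℕ → EuclideanSpace ℝ (Fin n))
    (hx : ∀ t ∈ Icc 1 T, x t ∈ X)
    (hxstar : ∀ t ∈ Icc 1 T, xstar t ∈ X ∧ ∀ y ∈ X, f t (xstar t) ≤ f t y)
    (S D G : ℝ) (hS : 0 ≤ S) (hD : 0 ≤ D) (hG : 0 ≤ G)
    (hSsum : ∑ t ∈ Icc 1 T, ‖x t - xstar t‖ ^ 2 ≤ 4 * S + 2 * D ^ 2)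
    (hGsum : ∑ t ∈ Icc 1 T, ‖g t (xstar t)‖ ^ 2 ≤ G)
    (α : ℝ) (hα : 0 < α) :
    ∑ t ∈ Icc 1 T, f t (x t) - ∑ t ∈ Icc 1 T, f t (xstar t)
      ≤ G / (2 * α) + 2 * (L + α) * S + (L + α) * D ^ 2 :=
  smooth_dynamic_regret_sum_bound_general X T f g L hL hsmooth x xstar hx hxstar S D G hSsum hGsum α
    hα
end
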